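/- Let U = (H ⊗ H ⊗ I_N) · (P₁ ⊗ I₂ ⊗ S₊ + P₀ ⊗ I₂ ⊗ I_N) · (I₂ ⊗ P₀ ⊗ S₋ + I₂ ⊗ P₁ ⊗ I_N) · (Z ⊗ Z ⊗ I_N) · (H ⊗ H ⊗ I_N), a 4N×4N complex matrix indexed by Fin 2 × Fin 2 × Fin N. Then U is a block encoding of the normalized discrete Laplacian with sub-normalization factor α = 1: for all j, k ∈ Fin N, the entry U((0,0,j), (0,0,k)) equals (L̃₁)_{jk}, where L̃₁ = (1/4)(S₊ + S₋) − (1/2)·I_N = (h²/4)·L₁. -/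

import Mathlib

/-!
Expanding the two middle factors gives four Kronecker products; the one pairing `S₊` with `S₋`
collapses because `S₊ S₋ = I` (the shifts are inverse permutation matrices). Each ancilla factor
is then `H P_a Z H`, whose `(0,0)` entry is `(-1)^a / 2` since the first row of `H` is `(1,1)/√2`,
and the four contributions add up to `¼ S₊ + ¼ S₋ − ¼ I − ¼ I`.
-/

open Matrix Kronecker

noncomputable section

/-- Cyclic shift matrix `S₊`: `(S₊)_{jk} = 1` iff `j ≡ k+1 (mod N)`. -/
def Sp (N : ℕ) [NeZero N] : Matrix (Fin N) (Fin N) ℂ :=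
  Matrix.of fun j k => if j = k + 1 then 1 else 0

/-- Cyclic shift matrix `S₋ = S₊ᵀ`. -/
def Sm (N : ℕ) [NeZero N] : Matrix (Fin N) (Fin N) ℂ := (Sp N)ᵀ

def P0 : Matrix (Fin 2) (Fin 2) ℂ := !![1, 0; 0, 0]
def P1 : Matrix (Fin 2) (Fin 2) ℂ := !![0, 0; 0, 1]
def Hg : Matrix (Fin 2) (Fin 2) ℂ := ((Real.sqrt 2 : ℝ) : ℂ)⁻¹ • !![1, 1; 1, -1]
def Zg : Matrix (Fin 2) (Fin 2) ℂ := !![1, 0; 0, -1]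

/-- The normalized discrete 1D periodic Laplacian `L̃₁ = (1/4)(S₊ + S₋) − (1/2)·I_N`. -/
def Lt1 (N : ℕ) [NeZero N] : Matrix (Fin N) (Fin N) ℂ :=
  (1 / 4 : ℂ) • (Sp N + Sm N) - (1 / 2 : ℂ) • (1 : Matrix (Fin N) (Fin N) ℂ)

lemma Sp_eq_permMatrix (N : ℕ) [NeZero N] :
    Sp N = Equiv.Perm.permMatrix ℂ (Equiv.subRight (1 : Fin N)) := by
  ext j k
  simp [Sp, PEquiv.toMatrix_apply, eq_sub_iff_add_eq, eq_comm]

lemma Sp_mul_Sm (N : ℕ) [NeZero N] : Sp N * Sm N = 1 := by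
  rw [Sm, Sp_eq_permMatrix, transpose_permMatrix, ← permMatrix_mul, inv_mul_cancel,
    permMatrix_one]

lemma Hg_mul_mul_Hg_zero_zero (A : Matrix (Fin 2) (Fin 2) ℂ) :
    (Hg * A * Hg) 0 0 = (A 0 0 + A 0 1 + A 1 0 + A 1 1) / 2 := by
  have hinv_sq : ((Real.sqrt 2 : ℝ) : ℂ)⁻¹ * ((Real.sqrt 2 : ℝ) : ℂ)⁻¹ = 1 / 2 := by
    rw [← mul_inv, ← Complex.ofReal_mul, Real.mul_self_sqrt zero_le_two]
    norm_num
  rw [Hg, Matrix.smul_mul, Matrix.smul_mul, Matrix.mul_smul, smul_smul, hinv_sq]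
  simp [Matrix.mul_apply, Fin.sum_univ_two, vecMul, dotProduct]
  ring

lemma Hg_mul_P0_mul_Zg_mul_Hg_zero_zero : (Hg * P0 * Zg * Hg) 0 0 = 1 / 2 := by
  rw [Matrix.mul_assoc Hg, Hg_mul_mul_Hg_zero_zero]
  simp [P0, Zg]

lemma Hg_mul_P1_mul_Zg_mul_Hg_zero_zero : (Hg * P1 * Zg * Hg) 0 0 = -(1 / 2) := by
  rw [Matrix.mul_assoc Hg, Hg_mul_mul_Hg_zero_zero]
  simp [P1, Zg]
  ring

theorem stmt_2_general (N : ℕ) [NeZero N]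
    (U : Matrix ((Fin 2 × Fin 2) × Fin N) ((Fin 2 × Fin 2) × Fin N) ℂ)
    (hU : U = (Hg ⊗ₖ Hg ⊗ₖ (1 : Matrix (Fin N) (Fin N) ℂ))
      * (P1 ⊗ₖ (1 : Matrix (Fin 2) (Fin 2) ℂ) ⊗ₖ Sp N
          + P0 ⊗ₖ (1 : Matrix (Fin 2) (Fin 2) ℂ) ⊗ₖ (1 : Matrix (Fin N) (Fin N) ℂ))
      * ((1 : Matrix (Fin 2) (Fin 2) ℂ) ⊗ₖ P0 ⊗ₖ Sm N
          + (1 : Matrix (Fin 2) (Fin 2) ℂ) ⊗ₖ P1 ⊗ₖ (1 : Matrix (Fin N) (Fin N) ℂ))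
      * (Zg ⊗ₖ Zg ⊗ₖ (1 : Matrix (Fin N) (Fin N) ℂ))
      * (Hg ⊗ₖ Hg ⊗ₖ (1 : Matrix (Fin N) (Fin N) ℂ))) :
    ∀ j k : Fin N, U (((0, 0), j)) (((0, 0), k)) = Lt1 N j k := by
  intro j k
  subst hU
  simp only [Matrix.mul_add, Matrix.add_mul, ← Matrix.mul_kronecker_mul, Matrix.one_mul,
    Matrix.mul_one, Sp_mul_Sm, Matrix.add_apply, Matrix.kroneckerMap_apply,
    Hg_mul_P0_mul_Zg_mul_Hg_zero_zero, Hg_mul_P1_mul_Zg_mul_Hg_zero_zero]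
  simp only [Lt1, Matrix.sub_apply, Matrix.smul_apply, Matrix.add_apply, smul_eq_mul]
  ring

theorem stmt_2 (n : ℕ) (hn : 1 ≤ n) (N : ℕ) (hN : N = 2 ^ n) [NeZero N]
    (U : Matrix ((Fin 2 × Fin 2) × Fin N) ((Fin 2 × Fin 2) × Fin N) ℂ)
    (hU : U = (Hg ⊗ₖ Hg ⊗ₖ (1 : Matrix (Fin N) (Fin N) ℂ))
      * (P1 ⊗ₖ (1 : Matrix (Fin 2) (Fin 2) ℂ) ⊗ₖ Sp N
          + P0 ⊗ₖ (1 : Matrix (Fin 2) (Fin 2) ℂ) ⊗ₖ (1 : Matrix (Fin N) (Fin N) ℂ))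
      * ((1 : Matrix (Fin 2) (Fin 2) ℂ) ⊗ₖ P0 ⊗ₖ Sm N
          + (1 : Matrix (Fin 2) (Fin 2) ℂ) ⊗ₖ P1 ⊗ₖ (1 : Matrix (Fin N) (Fin N) ℂ))
      * (Zg ⊗ₖ Zg ⊗ₖ (1 : Matrix (Fin N) (Fin N) ℂ))
      * (Hg ⊗ₖ Hg ⊗ₖ (1 : Matrix (Fin N) (Fin N) ℂ))) :
    ∀ j k : Fin N, U (((0, 0), j)) (((0, 0), k)) = Lt1 N j k :=
  stmt_2_general N U hU
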